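/- Consider a feasible anonymous Groves mechanism t in a multi-unit auction whose total payment at every θ equals 0 whenever the highest bid [θ]_1 equals the upper bound U. If t is also welfare-dominated-free only when no improvement is possible, then for every partial profile θ_{-i}, the maximum over θ_i of the total payment Σ_j t_j(θ) equals 0; moreover if for some θ_{-i} this maximum is strictly less than 0, then t is dominated by another feasible Groves mechanism (obtained by increasing agent i's tax function h by a positive constant on a neighborhood). -/

import Mathlib

/-!
Raising player `i`'s tax function `h` by `ε` at a single report profile `T` of the others raises
the total payment by `ε` exactly at the profiles `θ` whose `i`-th reduced profile is `T`. By
anonymity the total payment depends only on the multiset of all bids, so at those profiles it is a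
value of `θᵢ' ↦ totalPay (update θ i θᵢ')`; if that function stays below `-ε`, the raised mechanism
is still feasible and dominates the original one.
-/

/-- The `k`-th highest element (1-indexed) of a multiset of reals. -/
noncomputable def kthHighest (m : Multiset ℝ) (k : ℕ) : ℝ :=
  (m.sort (· ≤ ·)).getD (Multiset.card m - k) 0

/-- The multiset of all bids. -/
def allBids {n : ℕ} (θ : Fin n → ℝ) : Multiset ℝ :=
  (Finset.univ.val : Multiset (Fin n)).map θ

/-- The multiset of bids of players other than `i`. -/
def otherBids {n : ℕ} (θ : Fin n → ℝ) (i : Fin n) : Multiset ℝ :=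
  ((Finset.univ.erase i).val : Multiset (Fin n)).map θ

/-- Total payment of the Groves mechanism given (player-wise) by
`h' : Fin n → Multiset ℝ → ℝ`: the total VCG payment `−m[θ]_{m+1}` plus
`∑_i h'_i(θ_{-i})`. -/
noncomputable def totalPay {n : ℕ} (m : ℕ) (h' : Fin n → Multiset ℝ → ℝ)
    (θ : Fin n → ℝ) : ℝ :=
  -(m : ℝ) * kthHighest (allBids θ) (m + 1) + ∑ i, h' i (otherBids θ i)

/-- The anonymous Groves mechanism given by `h` is dominated by some feasible
Groves mechanism: some `h'` yields a feasible mechanism with every player's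
tax weakly larger (i.e. `h'_i(θ_{-i}) ≥ h(θ_{-i})`) everywhere, and somewhere
strictly larger. -/
def DominatedMech (n m : ℕ) (L U : ℝ) (h : Multiset ℝ → ℝ) : Prop :=
  ∃ h' : Fin n → Multiset ℝ → ℝ,
    (∀ θ : Fin n → ℝ, (∀ i, θ i ∈ Set.Icc L U) → totalPay m h' θ ≤ 0) ∧
    (∀ θ : Fin n → ℝ, (∀ i, θ i ∈ Set.Icc L U) → ∀ i : Fin n,
      h (otherBids θ i) ≤ h' i (otherBids θ i)) ∧
    (∃ θ : Fin n → ℝ, (∀ i, θ i ∈ Set.Icc L U) ∧ ∃ i : Fin n,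
      h (otherBids θ i) < h' i (otherBids θ i))

section Groves

variable {n m : ℕ}

lemma allBids_eq_cons (θ : Fin n → ℝ) (i : Fin n) : allBids θ = θ i ::ₘ otherBids θ i := by
  rw [allBids, otherBids, Finset.erase_val, ← Multiset.map_cons,
    Multiset.cons_erase (Finset.mem_univ i)]

lemma otherBids_eq_erase (θ : Fin n → ℝ) (i : Fin n) :
    otherBids θ i = (allBids θ).erase (θ i) := by
  rw [allBids_eq_cons θ i, Multiset.erase_cons_head]

@[simp]
lemma otherBids_update_self (θ : Fin n → ℝ) (i : Fin n) (x : ℝ) :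
    otherBids (Function.update θ i x) i = otherBids θ i :=
  Multiset.map_congr rfl fun _ hj =>
    Function.update_of_ne (Finset.ne_of_mem_erase (s := .univ) hj) _ _

lemma sum_otherBids_eq_sum_allBids (h : Multiset ℝ → ℝ) (θ : Fin n → ℝ) :
    ∑ j, h (otherBids θ j) = ((allBids θ).map fun x => h ((allBids θ).erase x)).sum := by
  simp only [otherBids_eq_erase, allBids, Multiset.map_map]
  rfl

lemma totalPay_eq_of_allBids_eq (h : Multiset ℝ → ℝ) {θ θ' : Fin n → ℝ}
    (hθ : allBids θ = allBids θ') : totalPay m (fun _ => h) θ = totalPay m (fun _ => h) θ' := by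
  rw [totalPay, totalPay, sum_otherBids_eq_sum_allBids, sum_otherBids_eq_sum_allBids, hθ]

lemma totalPay_eq_update_of_otherBids_eq (h : Multiset ℝ → ℝ) {θ θ' : Fin n → ℝ} {i : Fin n}
    (hθ : otherBids θ' i = otherBids θ i) :
    totalPay m (fun _ => h) θ' = totalPay m (fun _ => h) (Function.update θ i (θ' i)) :=
  totalPay_eq_of_allBids_eq h <| by
    rw [allBids_eq_cons θ' i, allBids_eq_cons _ i, Function.update_self, otherBids_update_self, hθ]

lemma totalPay_add (h g : Fin n → Multiset ℝ → ℝ) (θ : Fin n → ℝ) :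
    totalPay m (h + g) θ = totalPay m h θ + ∑ j, g j (otherBids θ j) := by
  simp only [totalPay, Pi.add_apply, Finset.sum_add_distrib]
  ring

noncomputable def raiseAt (h : Multiset ℝ → ℝ) (i : Fin n) (T : Multiset ℝ) (ε : ℝ) :
    Fin n → Multiset ℝ → ℝ :=
  (fun _ => h) + fun j s => if j = i ∧ s = T then ε else 0

lemma totalPay_raiseAt (h : Multiset ℝ → ℝ) (i : Fin n) (T : Multiset ℝ) (ε : ℝ)
    (θ : Fin n → ℝ) :
    totalPay m (raiseAt h i T ε) θ
      = totalPay m (fun _ => h) θ + if otherBids θ i = T then ε else 0 := by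
  rw [raiseAt, totalPay_add, Finset.sum_eq_single_of_mem i (Finset.mem_univ i)
    fun j _ hj => if_neg fun hj' => hj hj'.1]
  simp

variable {L U : ℝ} {h : Multiset ℝ → ℝ}

lemma totalPay_raiseAt_nonpos
    (hfeas : ∀ θ : Fin n → ℝ, (∀ i, θ i ∈ Set.Icc L U) → totalPay m (fun _ => h) θ ≤ 0)
    {θ : Fin n → ℝ} {i : Fin n} {ε : ℝ}
    (hgap : ∀ θi' ∈ Set.Icc L U, totalPay m (fun _ => h) (Function.update θ i θi') ≤ -ε)
    {θ' : Fin n → ℝ} (hθ' : ∀ j, θ' j ∈ Set.Icc L U) :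
    totalPay m (raiseAt h i (otherBids θ i) ε) θ' ≤ 0 := by
  rw [totalPay_raiseAt]
  split_ifs with hT
  · have := hgap (θ' i) (hθ' i)
    rw [totalPay_eq_update_of_otherBids_eq h hT]
    linarith
  · simpa using hfeas θ' hθ'

lemma dominatedMech_of_forall_totalPay_update_le
    (hfeas : ∀ θ : Fin n → ℝ, (∀ i, θ i ∈ Set.Icc L U) → totalPay m (fun _ => h) θ ≤ 0)
    {θ : Fin n → ℝ} (hθ : ∀ i, θ i ∈ Set.Icc L U) {i : Fin n} {ε : ℝ} (hε : 0 < ε)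
    (hgap : ∀ θi' ∈ Set.Icc L U, totalPay m (fun _ => h) (Function.update θ i θi') ≤ -ε) :
    DominatedMech n m L U h := by
  refine ⟨raiseAt h i (otherBids θ i) ε, fun θ' hθ' => totalPay_raiseAt_nonpos hfeas hgap hθ',
    fun θ' _ j => ?_, θ, hθ, i, by simp [raiseAt, hε]⟩
  simp only [raiseAt, Pi.add_apply, le_add_iff_nonneg_right]
  split_ifs <;> linarith

end Groves

theorem undominated_iff_max_total_zero_general
    {n m : ℕ} (L U : ℝ)
    (h : Multiset ℝ → ℝ)
    (hfeas : ∀ θ : Fin n → ℝ, (∀ i, θ i ∈ Set.Icc L U) →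
      totalPay m (fun _ => h) θ ≤ 0) :
    (¬ DominatedMech n m L U h →
      ∀ θ : Fin n → ℝ, (∀ i, θ i ∈ Set.Icc L U) → ∀ i : Fin n,
        IsLUB {x : ℝ | ∃ θi' ∈ Set.Icc L U,
          x = totalPay m (fun _ => h) (Function.update θ i θi')} 0) ∧
    (∀ θ : Fin n → ℝ, (∀ i, θ i ∈ Set.Icc L U) → ∀ i : Fin n, ∀ ε : ℝ, 0 < ε →
      (∀ θi' ∈ Set.Icc L U,
        totalPay m (fun _ => h) (Function.update θ i θi') ≤ -ε) →
      DominatedMech n m L U h) := by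
  refine ⟨fun hund θ hθ i => ⟨?_, fun b hb => ?_⟩,
    fun θ hθ i ε hε hgap => dominatedMech_of_forall_totalPay_update_le hfeas hθ hε hgap⟩
  · rintro _ ⟨θi', hθi', rfl⟩
    exact hfeas _ ((Function.forall_update_iff θ fun j x => x ∈ Set.Icc L U).2
      ⟨hθi', fun j _ => hθ j⟩)
  · by_contra! hb_neg
    exact hund <| dominatedMech_of_forall_totalPay_update_le hfeas hθ (neg_pos.2 hb_neg)
      fun θi' hθi' => by simpa using hb ⟨θi', hθi', rfl⟩

/-- for a feasible anonymous Groves mechanism `h` in a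
multi-unit auction: if it is undominated then for every player `i` and every
profile `θ_{-i}` of others' bids, the supremum over `θ_i ∈ [L,U]` of the
total payment equals `0`; moreover, if for some `i` and `θ_{-i}` the total
payment stays below `−ε < 0` for all `θ_i`, then the mechanism is dominated
by another feasible Groves mechanism. -/
theorem undominated_iff_max_total_zero
    {n m : ℕ} (hm0 : 0 < m) (hmn : m < n) (L U : ℝ) (hLU : L ≤ U)
    (h : Multiset ℝ → ℝ)
    (hfeas : ∀ θ : Fin n → ℝ, (∀ i, θ i ∈ Set.Icc L U) →
      totalPay m (fun _ => h) θ ≤ 0) :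
    (¬ DominatedMech n m L U h →
      ∀ θ : Fin n → ℝ, (∀ i, θ i ∈ Set.Icc L U) → ∀ i : Fin n,
        IsLUB {x : ℝ | ∃ θi' ∈ Set.Icc L U,
          x = totalPay m (fun _ => h) (Function.update θ i θi')} 0) ∧
    (∀ θ : Fin n → ℝ, (∀ i, θ i ∈ Set.Icc L U) → ∀ i : Fin n, ∀ ε : ℝ, 0 < ε →
      (∀ θi' ∈ Set.Icc L U,
        totalPay m (fun _ => h) (Function.update θ i θi') ≤ -ε) →
      DominatedMech n m L U h) :=
  undominated_iff_max_total_zero_general L U h hfeas
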